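/- Let n ≥ 3 be a natural number. Then the system h₁ = 0, h₂ = 0 has exactly one solution (z₁, z₂) ∈ ℝ² with z₁ > 0 and z₂ > 0, namely z₁ = z₂ = (n − 1)/(2(n − 2)). (This is the unique singularity at infinity of the normalized Ricci flow on the Stiefel manifold V₂ℝⁿ = SO(n)/SO(n−2), corresponding to its unique invariant Einstein metric.) -/
import Mathlib


/-- The first polynomial of the compactified normalized Ricci flow at infinity
for the Stiefel manifold V₂ℝⁿ = SO(n)/SO(n-2). -/
noncomputable def h₁ (n z₁ z₂ : ℝ) : ℝ :=
  (1 / 2) * (2 * n - 3) * z₁ *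
    ((n - 1) * (z₁ ^ 2 - 1) - 2 * (n - 2) * (z₁ - 1) * z₂ + (n - 3) * z₂ ^ 2)

/-- The second polynomial of the compactified normalized Ricci flow at infinity
for the Stiefel manifold V₂ℝⁿ = SO(n)/SO(n-2). -/
noncomputable def h₂ (n z₁ z₂ : ℝ) : ℝ :=
  (1 / 2) * (2 * n - 3) * z₂ *
    (n * (-2 * z₁ * z₂ + z₁ * (z₁ + 2) + z₂ ^ 2 - 1) - 3 * z₁ ^ 2
      + 4 * z₁ * (z₂ - 1) - z₂ ^ 2 + 1)

theorem stiefel_V2Rn_unique_singularity (n : ℕ) (hn : 3 ≤ n) :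
    {p : ℝ × ℝ | 0 < p.1 ∧ 0 < p.2 ∧
        h₁ (n : ℝ) p.1 p.2 = 0 ∧ h₂ (n : ℝ) p.1 p.2 = 0} =
      {(((n : ℝ) - 1) / (2 * ((n : ℝ) - 2)), ((n : ℝ) - 1) / (2 * ((n : ℝ) - 2)))} := by
  have hm : (3:ℝ) ≤ (n:ℝ) := by exact_mod_cast hn
  have hc : (1/2) * (2*(n:ℝ)-3) ≠ 0 := ne_of_gt (by nlinarith)
  have hne2 : (n:ℝ) - 2 ≠ 0 := by nlinarith
  ext ⟨z₁, z₂⟩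
  simp only [Set.mem_setOf_eq, Set.mem_singleton_iff, Prod.mk.injEq]
  constructor
  · rintro ⟨h1, h2, e1, e2⟩
    unfold h₁ at e1
    unfold h₂ at e2
    have hP : ((n:ℝ) - 1) * (z₁ ^ 2 - 1) - 2 * ((n:ℝ) - 2) * (z₁ - 1) * z₂
        + ((n:ℝ) - 3) * z₂ ^ 2 = 0 := by
      rcases mul_eq_zero.mp e1 with h | h
      · rcases mul_eq_zero.mp h with h' | h'
        · exact absurd h' hc
        · exact absurd h' (ne_of_gt h1)
      · exact h
    have hQ : (n:ℝ) * (-2 * z₁ * z₂ + z₁ * (z₁ + 2) + z₂ ^ 2 - 1) - 3 * z₁ ^ 2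
        + 4 * z₁ * (z₂ - 1) - z₂ ^ 2 + 1 = 0 := by
      rcases mul_eq_zero.mp e2 with h | h
      · rcases mul_eq_zero.mp h with h' | h'
        · exact absurd h' hc
        · exact absurd h' (ne_of_gt h2)
      · exact h
    have hkey : (z₁ - z₂) * (z₁ + z₂ - ((n:ℝ) - 2)) = 0 := by
      linear_combination (1/2) * hP - (1/2) * hQ
    rcases mul_eq_zero.mp hkey with h | h
    · -- z₁ = z₂
      have hz : z₁ = z₂ := by linarith [sub_eq_zero.mp h]
      subst hz
      have hlin : 2 * ((n:ℝ) - 2) * z₁ - ((n:ℝ) - 1) = 0 := by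
        linear_combination hP
      have : z₁ = ((n:ℝ) - 1) / (2 * ((n:ℝ) - 2)) := by
        field_simp
        linarith
      exact ⟨this, this⟩
    · -- z₁ + z₂ = n - 2 : contradiction
      exfalso
      have hline : z₁ + z₂ = (n:ℝ) - 2 := by linarith [sub_eq_zero.mp h]
      rcases Nat.lt_or_ge n 4 with h4 | h4
      · have hn3 : n = 3 := by omega
        subst hn3
        norm_num at hline hP
        nlinarith [mul_pos h1 h2]
      · have hm4 : (4:ℝ) ≤ (n:ℝ) := by exact_mod_cast h4
        nlinarith [mul_pos h1 h2, sq_nonneg (z₁ - z₂)]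
  · rintro ⟨rfl, rfl⟩
    have hpos : 0 < ((n:ℝ) - 1) / (2 * ((n:ℝ) - 2)) := by
      apply div_pos <;> nlinarith
    set e : ℝ := ((n:ℝ) - 1) / (2 * ((n:ℝ) - 2)) with hedef
    have he : 2 * ((n:ℝ) - 2) * e = (n:ℝ) - 1 := by
      rw [hedef]; field_simp
    refine ⟨hpos, hpos, ?_, ?_⟩
    · unfold h₁; linear_combination (1/2 * (2*(n:ℝ)-3) * e) * he
    · unfold h₂; linear_combination (1/2 * (2*(n:ℝ)-3) * e) * he
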